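/- Let g : ℝⁿ → [0,∞) be p-concave and 1/p-homogeneous for some p > 0, and let u ∈ ℝⁿ be in the support of g. Then for all w ∈ ℝⁿ and all t₁ ≥ t₂ ≥ 0, g(w + t₁ u) ≥ g(w + t₂ u). That is, g is nondecreasing along rays in directions from its support. -/

import Mathlib

/-!
Writing `x + y = ½ (2x) + ½ (2y)`, `p`-concavity combined with `1/p`-homogeneity makes `g ^ p`
superadditive on the support: `g (x + y) ^ p ≥ g x ^ p + g y ^ p`. Hence moving from `w + t₂ u`
by `(t₁ - t₂) u`, a point of the support, cannot decrease `g`.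
-/

section

variable {E : Type*} [AddCommGroup E] [Module ℝ E] {p : ℝ} {g : E → ℝ}

def IsPConcave (p : ℝ) (g : E → ℝ) : Prop :=
  ∀ x y, 0 < g x → 0 < g y → ∀ l : ℝ, 0 ≤ l → l ≤ 1 →
    (l * g x ^ p + (1 - l) * g y ^ p) ^ (1 / p) ≤ g (l • x + (1 - l) • y)

def IsHomogeneousOfDegree (r : ℝ) (g : E → ℝ) : Prop :=
  ∀ a : ℝ, 0 < a → ∀ x, g (a • x) = a ^ r * g x

namespace IsHomogeneousOfDegree

theorem apply_smul_pos {r : ℝ} (hh : IsHomogeneousOfDegree r g) {a : ℝ} (ha : 0 < a) {x : E}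
    (hx : 0 < g x) : 0 < g (a • x) := by
  rw [hh a ha]
  exact mul_pos (Real.rpow_pos_of_pos ha r) hx

theorem rpow_apply_smul (hh : IsHomogeneousOfDegree (1 / p) g) (hp : 0 < p) {a : ℝ} (ha : 0 < a)
    {x : E} (hx : 0 ≤ g x) : g (a • x) ^ p = a * g x ^ p := by
  rw [hh a ha, Real.mul_rpow (Real.rpow_nonneg ha.le _) hx, ← Real.rpow_mul ha.le,
    one_div_mul_cancel hp.ne', Real.rpow_one]

end IsHomogeneousOfDegree

namespace IsPConcave

theorem rpow_add_rpow_le_apply_add (hc : IsPConcave p g) (hh : IsHomogeneousOfDegree (1 / p) g)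
    (hp : 0 < p) {x y : E} (hx : 0 < g x) (hy : 0 < g y) :
    (g x ^ p + g y ^ p) ^ (1 / p) ≤ g (x + y) := by
  have h2 : (0 : ℝ) < 2 := two_pos
  have key := hc _ _ (hh.apply_smul_pos h2 hx) (hh.apply_smul_pos h2 hy) (1 / 2)
    (by norm_num) (by norm_num)
  have hmid : (1 / 2 : ℝ) • ((2 : ℝ) • x) + (1 - 1 / 2 : ℝ) • ((2 : ℝ) • y) = x + y := by module
  rw [hmid, hh.rpow_apply_smul hp h2 hx.le, hh.rpow_apply_smul hp h2 hy.le] at key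
  convert key using 2
  ring

theorem apply_le_apply_add (hc : IsPConcave p g) (hh : IsHomogeneousOfDegree (1 / p) g)
    (hp : 0 < p) (hg0 : ∀ x, 0 ≤ g x) (x : E) {y : E} (hy : 0 < g y) : g x ≤ g (x + y) := by
  rcases (hg0 x).eq_or_lt with hx | hx
  · exact hx ▸ hg0 _
  calc g x = (g x ^ p) ^ (1 / p) := by
        rw [← Real.rpow_mul (hg0 x), mul_one_div_cancel hp.ne', Real.rpow_one]
    _ ≤ (g x ^ p + g y ^ p) ^ (1 / p) := by
        gcongr
        exact le_add_of_nonneg_right (Real.rpow_nonneg hy.le p)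
    _ ≤ g (x + y) := hc.rpow_add_rpow_le_apply_add hh hp hx hy

end IsPConcave

end

/-- A `p`-concave, `1/p`-homogeneous `g : ℝⁿ → [0,∞)` is nondecreasing along rays in
directions from its support. -/
theorem monotone_along_support_rays {n : ℕ} (p : ℝ) (hp : 0 < p)
    (g : EuclideanSpace ℝ (Fin n) → ℝ) (hg0 : ∀ x, 0 ≤ g x)
    (hconc : ∀ x y, 0 < g x → 0 < g y → ∀ l : ℝ, 0 ≤ l → l ≤ 1 →
      (l * g x ^ p + (1 - l) * g y ^ p) ^ (1 / p) ≤ g (l • x + (1 - l) • y))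
    (hhom : ∀ a : ℝ, 0 < a → ∀ x, g (a • x) = a ^ (1 / p) * g x)
    (u : EuclideanSpace ℝ (Fin n)) (hu : 0 < g u) :
    ∀ w : EuclideanSpace ℝ (Fin n), ∀ t₁ t₂ : ℝ, 0 ≤ t₂ → t₂ ≤ t₁ →
      g (w + t₂ • u) ≤ g (w + t₁ • u) := by
  intro w t₁ t₂ _ ht
  rcases ht.eq_or_lt with rfl | ht
  · rfl
  have hstep : w + t₁ • u = (w + t₂ • u) + (t₁ - t₂) • u := by module
  rw [hstep]
  exact IsPConcave.apply_le_apply_add hconc hhom hp hg0 _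
    (IsHomogeneousOfDegree.apply_smul_pos hhom (sub_pos.mpr ht) hu)
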